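/- arXiv:1804.06252 — 4 statements merged into one kernel-verified Lean document; each statement's English description precedes it below -/
import Mathlib

section
/- Let A = (A₁ A₂) ∈ ℝ^{m×n} with A₁ ∈ ℝ^{m×k}, rank(A₁) = k, and r ≥ k. Then the matrix Ã₂ = P_{A₁}(A₂) + H_{r−k}(P⊥_{A₁}(A₂)) minimizes ‖A₂ − X₂‖_F over all X₂ such that rank(A₁ X₂) ≤ r, where P_{A₁} and P⊥_{A₁} are the orthogonal projections onto the column space of A₁ and its orthogonal complement, and H_{r−k} denotes rank-(r−k) truncated SVD. -/
open Matrix Filter Topology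

noncomputable def frobSq {α β : Type*} [Fintype α] [Fintype β] (A : Matrix α β ℝ) : ℝ :=
  ∑ i, ∑ j, (A i j) ^ 2

noncomputable def frob {α β : Type*} [Fintype α] [Fintype β] (A : Matrix α β ℝ) : ℝ :=
  Real.sqrt (frobSq A)

/-!
Let `Q = 1 - P` be the orthogonal projection onto the complement of the column space of `A₁`.
For any `X₂` with `rank (A₁ X₂) ≤ r`, the column spaces of `A₁` and `Q X₂` are independent
subspaces of that of `(A₁ X₂)`, so `rank (Q X₂) ≤ r - k`. Since `A₂ - (P A₂ + H) = Q A₂ - H`,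
optimality of `H` and Pythagoras give
`‖Q A₂ - H‖ ≤ ‖Q A₂ - Q X₂‖ = ‖Q (A₂ - X₂)‖ ≤ ‖A₂ - X₂‖`.
-/

section Frobenius

variable {m n : Type*} [Fintype m] [Fintype n]

lemma frobSq_nonneg (A : Matrix m n ℝ) : 0 ≤ frobSq A :=
  Finset.sum_nonneg fun _ _ => Finset.sum_nonneg fun _ _ => sq_nonneg _

lemma frobSq_eq_trace (A : Matrix m n ℝ) : frobSq A = trace (Aᵀ * A) := by
  simp only [frobSq, trace, diag, mul_apply, transpose_apply, sq]
  exact Finset.sum_comm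

lemma frobSq_mul_eq_trace {P : Matrix m m ℝ} (hsymm : Pᵀ = P) (hidem : IsIdempotentElem P)
    (M : Matrix m n ℝ) : frobSq (P * M) = trace (Mᵀ * (P * M)) := by
  rw [frobSq_eq_trace, transpose_mul, hsymm, Matrix.mul_assoc, ← Matrix.mul_assoc P, hidem.eq]

lemma frobSq_eq_frobSq_mul_add_frobSq_one_sub_mul [DecidableEq m] {P : Matrix m m ℝ}
    (hsymm : Pᵀ = P) (hidem : IsIdempotentElem P) (M : Matrix m n ℝ) :
    frobSq M = frobSq (P * M) + frobSq ((1 - P) * M) := by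
  have hsymm' : (1 - P)ᵀ = 1 - P := by rw [transpose_sub, transpose_one, hsymm]
  rw [frobSq_mul_eq_trace hsymm hidem, frobSq_mul_eq_trace hsymm' hidem.one_sub, ← trace_add,
    ← Matrix.mul_add, ← Matrix.add_mul, add_sub_cancel, Matrix.one_mul, frobSq_eq_trace]

lemma frob_mul_le [DecidableEq m] {P : Matrix m m ℝ} (hsymm : Pᵀ = P)
    (hidem : IsIdempotentElem P) (M : Matrix m n ℝ) : frob (P * M) ≤ frob M :=
  Real.sqrt_le_sqrt <| by
    linarith [frobSq_eq_frobSq_mul_add_frobSq_one_sub_mul hsymm hidem M,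
      frobSq_nonneg ((1 - P) * M)]

end Frobenius

section Rank

variable {K : Type*} [Field K] {m n p : Type*} [Fintype n] [DecidableEq n]

lemma isUnit_of_rank_eq_card {M : Matrix n n K} (h : M.rank = Fintype.card n) :
    IsUnit M := by
  have hrange : LinearMap.range M.mulVecLin = ⊤ :=
    Submodule.eq_top_of_finrank_eq (by rw [← rank, h, Module.finrank_fintype_fun_eq_card])
  exact mulVec_surjective_iff_isUnit.mp (LinearMap.range_eq_top.mp hrange)

lemma isUnit_transpose_mul_self_of_rank_eq_card [LinearOrder K] [IsStrictOrderedRing K] [Fintype m]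
    {A : Matrix m n K} (h : A.rank = Fintype.card n) : IsUnit (Aᵀ * A) :=
  isUnit_of_rank_eq_card (by rw [rank_transpose_mul_self, h])

omit [DecidableEq n] in
lemma range_mulVecLin_mul_le [Fintype p] (M : Matrix m n K) (C : Matrix n p K) :
    LinearMap.range (M * C).mulVecLin ≤ LinearMap.range M.mulVecLin := by
  rw [mulVecLin_mul]
  exact LinearMap.range_comp_le_range _ _

lemma isIdempotentElem_mul_of_mul_eq_one [Fintype m] {A : Matrix m n K} {B : Matrix n m K}
    (hBA : B * A = 1) : IsIdempotentElem (A * B) := by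
  rw [IsIdempotentElem, Matrix.mul_assoc, ← Matrix.mul_assoc B, hBA, Matrix.one_mul]

/-- `Q = 1 - A * B` is an idempotent killing `A`, so it is the identity on the column space of
`Q * X` and zero on that of `A`: the two spaces are independent inside that of `fromCols A X`. -/
lemma rank_add_rank_one_sub_mul_le_rank_fromCols [Fintype m] [DecidableEq m] [Fintype p]
    {A : Matrix m n K} {B : Matrix n m K} (hBA : B * A = 1) (X : Matrix m p K) :
    A.rank + ((1 - A * B) * X).rank ≤ (fromCols A X).rank := by
  classical
  set Q := 1 - A * B
  have hQA : Q * A = 0 := by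
    rw [Matrix.sub_mul, Matrix.one_mul, Matrix.mul_assoc, hBA, Matrix.mul_one, sub_self]
  have hQ : IsIdempotentElem Q := (isIdempotentElem_mul_of_mul_eq_one hBA).one_sub
  have hA : LinearMap.range A.mulVecLin ≤ LinearMap.range (fromCols A X).mulVecLin := by
    have h := range_mulVecLin_mul_le (fromCols A X)
      (fromRows (1 : Matrix n n K) (0 : Matrix p n K))
    rwa [fromCols_mul_fromRows, Matrix.mul_one, Matrix.mul_zero, add_zero] at h
  have hQX : LinearMap.range (Q * X).mulVecLin ≤ LinearMap.range (fromCols A X).mulVecLin := by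
    have hfactor : Q * X = fromCols A X * fromRows (-(B * X)) (1 : Matrix p p K) := by
      rw [fromCols_mul_fromRows, Matrix.mul_one, Matrix.mul_neg, Matrix.sub_mul, Matrix.one_mul,
        Matrix.mul_assoc, neg_add_eq_sub]
    rw [hfactor]
    exact range_mulVecLin_mul_le _ _
  have hdisj : LinearMap.range A.mulVecLin ⊓ LinearMap.range (Q * X).mulVecLin = ⊥ := by
    refine eq_bot_iff.mpr fun x ⟨⟨u, hu⟩, ⟨w, hw⟩⟩ => ?_
    simp only [mulVecLin_apply] at hu hw
    have hQx : Q *ᵥ x = 0 := by rw [← hu, mulVec_mulVec, hQA, zero_mulVec]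
    rw [← hw, mulVec_mulVec, ← Matrix.mul_assoc, hQ.eq, hw] at hQx
    simp [hQx]
  have hsum := Submodule.finrank_sup_add_finrank_inf_eq
    (LinearMap.range A.mulVecLin) (LinearMap.range (Q * X).mulVecLin)
  rw [hdisj, finrank_bot, add_zero] at hsum
  unfold Matrix.rank
  rw [← hsum]
  exact Submodule.finrank_mono (sup_le hA hQX)

lemma transpose_mul_inv_transpose_mul_self_mul_transpose [Fintype m] (A : Matrix m n K) :
    (A * (Aᵀ * A)⁻¹ * Aᵀ)ᵀ = A * (Aᵀ * A)⁻¹ * Aᵀ := by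
  rw [transpose_mul, transpose_mul, transpose_transpose, transpose_nonsing_inv, transpose_mul,
    transpose_transpose, Matrix.mul_assoc]

end Rank

theorem stmt2_general {m k nk r : ℕ}
    (A₁ : Matrix (Fin m) (Fin k) ℝ) (A₂ : Matrix (Fin m) (Fin nk) ℝ)
    (hrank : A₁.rank = k)
    (P : Matrix (Fin m) (Fin m) ℝ) (hP : P = A₁ * (A₁ᵀ * A₁)⁻¹ * A₁ᵀ)
    (H : Matrix (Fin m) (Fin nk) ℝ)
    (hHbest : ∀ Y : Matrix (Fin m) (Fin nk) ℝ, Y.rank ≤ r - k →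
      frob ((1 - P) * A₂ - H) ≤ frob ((1 - P) * A₂ - Y)) :
    ∀ X₂ : Matrix (Fin m) (Fin nk) ℝ,
      (Matrix.fromCols A₁ X₂).rank ≤ r →
      frob (A₂ - (P * A₂ + H)) ≤ frob (A₂ - X₂) := by
  intro X₂ hX
  have hBA : ((A₁ᵀ * A₁)⁻¹ * A₁ᵀ) * A₁ = 1 := by
    rw [Matrix.mul_assoc]
    exact nonsing_inv_mul _ ((isUnit_iff_isUnit_det _).mp
      (isUnit_transpose_mul_self_of_rank_eq_card (by rw [hrank, Fintype.card_fin])))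
  have hPAB : P = A₁ * ((A₁ᵀ * A₁)⁻¹ * A₁ᵀ) := by rw [hP, Matrix.mul_assoc]
  have hPX : ((1 - P) * X₂).rank ≤ r - k := by
    have := rank_add_rank_one_sub_mul_le_rank_fromCols hBA X₂
    rw [hrank, ← hPAB] at this
    omega
  have hQsymm : (1 - P)ᵀ = 1 - P := by
    rw [transpose_sub, transpose_one, hP, transpose_mul_inv_transpose_mul_self_mul_transpose]
  have hQidem : IsIdempotentElem (1 - P) :=
    (hPAB ▸ isIdempotentElem_mul_of_mul_eq_one hBA).one_sub
  calc frob (A₂ - (P * A₂ + H)) = frob ((1 - P) * A₂ - H) := by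
        rw [Matrix.sub_mul, Matrix.one_mul, sub_sub]
    _ ≤ frob ((1 - P) * A₂ - (1 - P) * X₂) := hHbest _ hPX
    _ = frob ((1 - P) * (A₂ - X₂)) := by rw [Matrix.mul_sub]
    _ ≤ frob (A₂ - X₂) := frob_mul_le hQsymm hQidem _

/-- Golub–Hoffman–Stewart: Ã₂ = P_{A₁}(A₂) + H_{r−k}(P⊥_{A₁}(A₂)) minimizes
‖A₂ − X₂‖_F over all X₂ with rank(A₁ X₂) ≤ r. -/
theorem stmt2 {m k nk r : ℕ} (hkr : k ≤ r)
    (A₁ : Matrix (Fin m) (Fin k) ℝ) (A₂ : Matrix (Fin m) (Fin nk) ℝ)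
    (hrank : A₁.rank = k)
    (P : Matrix (Fin m) (Fin m) ℝ) (hP : P = A₁ * (A₁ᵀ * A₁)⁻¹ * A₁ᵀ)
    (H : Matrix (Fin m) (Fin nk) ℝ)
    (hHrank : H.rank ≤ r - k)
    (hHbest : ∀ Y : Matrix (Fin m) (Fin nk) ℝ, Y.rank ≤ r - k →
      frob ((1 - P) * A₂ - H) ≤ frob ((1 - P) * A₂ - Y)) :
    ∀ X₂ : Matrix (Fin m) (Fin nk) ℝ,
      (Matrix.fromCols A₁ X₂).rank ≤ r →
      frob (A₂ - (P * A₂ + H)) ≤ frob (A₂ - X₂) :=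
  stmt2_general A₁ A₂ hrank P hP H hHbest
end

section
/- Any matrix X₂ ∈ ℝ^{m×(n−k)} satisfies rank(X₁ X₂) ≤ r (for given X₁ ∈ ℝ^{m×k} with rank(X₁) = k ≤ r) if and only if X₂ can be written as X₂ = X₁C + BD for some matrices C ∈ ℝ^{k×(n−k)}, B ∈ ℝ^{m×(r−k)}, and D ∈ ℝ^{(r−k)×(n−k)}. -/
open Matrix Filter Topology

/-!
The column space `U` of `X₁` has dimension `k` and lies in the column space `V` of `(X₁ X₂)`,
of dimension at most `r`. A complement of `U` in `V` therefore has dimension at most `r - k`, so it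
is spanned by the `r - k` columns of some `B`; every column of `X₂` then lies in the column space
of `(X₁ B)`, i.e. `X₂ = (X₁ B) N = X₁ C + B D`. Conversely
`(X₁  X₁C + BD) = (X₁ B) * [[1, C], [0, D]]` has rank at most `k + (r - k) = r`, the number of
columns of `(X₁ B)`.
-/

open Module

namespace Submodule

variable {K V : Type*} [DivisionRing K] [AddCommGroup V] [Module K V]

theorem exists_fin_le_span (S : Submodule K V) [FiniteDimensional K S] {d : ℕ}
    (hd : finrank K S ≤ d) : ∃ b : Fin d → V, S ≤ span K (Set.range b) := by
  let s := finBasis K S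
  let b : Fin d → V := Function.extend (Fin.castLE hd) (fun i => (s i : V)) 0
  have hsb : Set.range (fun i => (s i : V)) ⊆ Set.range b := by
    rintro _ ⟨i, rfl⟩
    exact ⟨Fin.castLE hd i, (Fin.castLE_injective hd).extend_apply _ _ i⟩
  refine ⟨b, ?_⟩
  calc S = (span K (Set.range s)).map S.subtype := by rw [s.span_eq, map_subtype_top]
    _ = span K (Set.range fun i => (s i : V)) := by rw [← span_image, ← Set.range_comp]; rfl
    _ ≤ span K (Set.range b) := span_mono hsb

theorem exists_fin_le_sup_span {U W : Submodule K V} [FiniteDimensional K W] (hUW : U ≤ W)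
    {d : ℕ} (hd : finrank K W ≤ finrank K U + d) :
    ∃ b : Fin d → V, W ≤ U ⊔ span K (Set.range b) := by
  obtain ⟨S, hUS, hUS_eq⟩ := IsModularLattice.exists_disjoint_and_sup_eq hUW
  have : FiniteDimensional K U := finiteDimensional_of_le hUW
  have : FiniteDimensional K S := finiteDimensional_of_le (hUS_eq ▸ le_sup_right)
  have hdim := finrank_sup_add_finrank_inf_eq U S
  rw [hUS.eq_bot, finrank_bot, hUS_eq] at hdim
  obtain ⟨b, hb⟩ := S.exists_fin_le_span (d := d) (by omega)
  exact ⟨b, hUS_eq ▸ sup_le_sup_left hb U⟩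

end Submodule

namespace Matrix

variable {m n n₁ n₂ l R K : Type*}

theorem col_fromCols (A : Matrix m n₁ R) (B : Matrix m n₂ R) :
    (fromCols A B).col = Sum.elim A.col B.col := by
  ext (j | j) i <;> rfl

theorem span_cols_fromCols [Semiring R] (A : Matrix m n₁ R) (B : Matrix m n₂ R) :
    Submodule.span R (Set.range (fromCols A B).col) =
      Submodule.span R (Set.range A.col) ⊔ Submodule.span R (Set.range B.col) := by
  rw [col_fromCols, Set.Sum.elim_range, Submodule.span_union]

theorem exists_eq_mul_of_col_mem_span [Fintype l] [CommSemiring R] {A : Matrix m n R}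
    {M : Matrix m l R} (h : ∀ j, A.col j ∈ Submodule.span R (Set.range M.col)) :
    ∃ N : Matrix l n R, A = M * N := by
  choose c hc using fun j => (Submodule.mem_span_range_iff_exists_fun R).mp (h j)
  refine ⟨(of c)ᵀ, ?_⟩
  ext i j
  change A.col j i = _
  rw [← hc j]
  simp [mul_apply, mul_comm]

theorem exists_eq_fromCols_mul_of_rank_fromCols_le [Fintype m] [Fintype n₁] [Fintype n₂]
    [Field K] (A : Matrix m n₁ K) (X : Matrix m n₂ K) {d : ℕ}
    (h : (fromCols A X).rank ≤ A.rank + d) :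
    ∃ (B : Matrix m (Fin d) K) (N : Matrix (n₁ ⊕ Fin d) n₂ K), X = fromCols A B * N := by
  rw [rank_eq_finrank_span_cols, rank_eq_finrank_span_cols] at h
  have hAX : Submodule.span K (Set.range A.col) ≤ Submodule.span K (Set.range (fromCols A X).col) :=
    Submodule.span_mono (col_fromCols A X ▸ Set.Sum.elim_range _ _ ▸ Set.subset_union_left)
  obtain ⟨b, hb⟩ := Submodule.exists_fin_le_sup_span hAX h
  refine ⟨(of b)ᵀ, exists_eq_mul_of_col_mem_span fun j => ?_⟩
  rw [span_cols_fromCols]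
  exact hb (Submodule.subset_span ⟨Sum.inr j, rfl⟩)

theorem rank_fromCols_mul_add_mul_le [Fintype m] [Fintype n₁] [Fintype n₂] [Fintype n]
    [DecidableEq n₁] [Field K] (A : Matrix m n₁ K) (B : Matrix m n₂ K) (C : Matrix n₁ n K)
    (D : Matrix n₂ n K) :
    (fromCols A (A * C + B * D)).rank ≤ Fintype.card n₁ + Fintype.card n₂ := by
  have hfac : fromCols A (A * C + B * D) = fromCols A B * fromBlocks 1 C 0 D := by
    rw [fromCols_mul_fromBlocks]; simp
  calc (fromCols A (A * C + B * D)).rank ≤ (fromCols A B).rank := hfac ▸ rank_mul_le_left _ _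
    _ ≤ Fintype.card (n₁ ⊕ n₂) := rank_le_card_width _
    _ = Fintype.card n₁ + Fintype.card n₂ := Fintype.card_sum

end Matrix

/-- rank(X₁ X₂) ≤ r iff X₂ = X₁C + BD for some C, B, D, when rank(X₁) = k ≤ r. -/
theorem stmt6 {m k nk r : ℕ} (hkr : k ≤ r)
    (X₁ : Matrix (Fin m) (Fin k) ℝ) (hrank : X₁.rank = k)
    (X₂ : Matrix (Fin m) (Fin nk) ℝ) :
    (Matrix.fromCols X₁ X₂).rank ≤ r ↔
      ∃ (C : Matrix (Fin k) (Fin nk) ℝ) (B : Matrix (Fin m) (Fin (r - k)) ℝ)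
        (D : Matrix (Fin (r - k)) (Fin nk) ℝ), X₂ = X₁ * C + B * D := by
  constructor
  · intro h
    obtain ⟨B, N, rfl⟩ :=
      exists_eq_fromCols_mul_of_rank_fromCols_le X₁ X₂ (d := r - k) (by omega)
    exact ⟨N.toRows₁, B, N.toRows₂, by rw [← fromCols_mul_fromRows, fromRows_toRows]⟩
  · rintro ⟨C, B, D, rfl⟩
    simpa [hkr] using rank_fromCols_mul_add_mul_le X₁ B C D
end

section
/- Let F(X₁,C,B,D) = ‖(A₁−X₁)⊙W₁‖_F² + ‖A₂ − X₁C − BD‖_F² with all entries of W₁ strictly positive, and let iterates be defined by exact alternating minimization over X₁, C, B, D in this order. Then with m_p = F((X₁)_p, C_p, B_p, D_p), the identity m_p − m_{p+1} = ‖((X₁)_p − (X₁)_{p+1})⊙W₁‖_F² + ‖((X₁)_p − (X₁)_{p+1})C_p‖_F² + ‖(X₁)_{p+1}(C_p − C_{p+1})‖_F² + ‖(B_p − B_{p+1})D_p‖_F² + ‖B_{p+1}(D_p − D_{p+1})‖_F² holds for all p. -/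
open Matrix Filter Topology

noncomputable def Ffun {m k nk rk : ℕ} (A₁ W₁ : Matrix (Fin m) (Fin k) ℝ)
    (A₂ : Matrix (Fin m) (Fin nk) ℝ) (X₁ : Matrix (Fin m) (Fin k) ℝ)
    (C : Matrix (Fin k) (Fin nk) ℝ) (B : Matrix (Fin m) (Fin rk) ℝ)
    (D : Matrix (Fin rk) (Fin nk) ℝ) : ℝ :=
  frobSq (Matrix.hadamard (A₁ - X₁) W₁) + frobSq (A₂ - X₁ * C - B * D)

noncomputable def ipM {α β : Type*} [Fintype α] [Fintype β] (A B : Matrix α β ℝ) : ℝ :=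
  ∑ i, ∑ j, (A i j) * (B i j)

lemma frobSq_nonneg' {α β : Type*} [Fintype α] [Fintype β] (A : Matrix α β ℝ) :
    0 ≤ frobSq A :=
  Finset.sum_nonneg fun _ _ => Finset.sum_nonneg fun _ _ => sq_nonneg _

lemma frobSq_neg' {α β : Type*} [Fintype α] [Fintype β] (A : Matrix α β ℝ) :
    frobSq (-A) = frobSq A := by
  simp [frobSq]

lemma frobSq_zero' {α β : Type*} [Fintype α] [Fintype β] :
    frobSq (0 : Matrix α β ℝ) = 0 := by
  simp [frobSq]

lemma had_sub {α β : Type*} (M N W : Matrix α β ℝ) :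
    Matrix.hadamard (M - N) W = Matrix.hadamard M W - Matrix.hadamard N W := by
  ext i j; simp [Matrix.hadamard_apply, sub_mul]

lemma frobSq_add_smul' {α β : Type*} [Fintype α] [Fintype β] (M N : Matrix α β ℝ) (t : ℝ) :
    frobSq (M + t • N) = frobSq M + 2 * t * ipM M N + t ^ 2 * frobSq N := by
  have h : ∀ i j, (M i j + t * N i j) ^ 2 =
      M i j ^ 2 + 2 * t * (M i j * N i j) + t ^ 2 * N i j ^ 2 := fun i j => by ring
  simp only [frobSq, ipM, Matrix.add_apply, Matrix.smul_apply, smul_eq_mul, h,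
    Finset.sum_add_distrib, Finset.mul_sum]

/-- Exact minimization of a (sum of two) quadratic functional along a line: the decrease
is exactly the quadratic part. -/
lemma quad_diff {α β γ δ : Type*} [Fintype α] [Fintype β] [Fintype γ] [Fintype δ]
    (P Q : Matrix α β ℝ) (R S : Matrix γ δ ℝ)
    (hmin : ∀ t : ℝ, frobSq P + frobSq R ≤ frobSq (P + t • Q) + frobSq (R + t • S)) :
    frobSq (P + Q) + frobSq (R + S) = frobSq P + frobSq R + (frobSq Q + frobSq S) := by
  set l : ℝ := 2 * (ipM P Q + ipM R S) with hl
  set q : ℝ := frobSq Q + frobSq S with hq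
  have hexp : ∀ t : ℝ, frobSq (P + t • Q) + frobSq (R + t • S) =
      frobSq P + frobSq R + l * t + q * t ^ 2 := by
    intro t; rw [frobSq_add_smul', frobSq_add_smul']; ring
  have hqn : 0 ≤ q := add_nonneg (frobSq_nonneg' _) (frobSq_nonneg' _)
  have hq1 : (0:ℝ) < q + 1 := by linarith
  set s : ℝ := l / (q + 1) with hsdef
  have hs : s * (q + 1) = l := div_mul_cancel₀ _ (ne_of_gt hq1)
  have h := hmin (-s)
  rw [hexp] at h
  have key : 0 ≤ q * s ^ 2 - l * s := by nlinarith [h]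
  have hs0 : s = 0 := by nlinarith [key, hs, sq_nonneg s]
  have hl0 : l = 0 := by rw [← hs, hs0]; ring
  have h1 := hexp 1
  simp only [one_smul] at h1
  rw [h1, hl0]; ring

/-- Exact alternating minimization decrease identity (Theorem on m_p − m_{p+1}). -/
theorem stmt7 {m k nk rk : ℕ}
    (A₁ W₁ : Matrix (Fin m) (Fin k) ℝ) (A₂ : Matrix (Fin m) (Fin nk) ℝ)
    (hW : ∀ i j, 0 < W₁ i j)
    (X : ℕ → Matrix (Fin m) (Fin k) ℝ) (C : ℕ → Matrix (Fin k) (Fin nk) ℝ)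
    (B : ℕ → Matrix (Fin m) (Fin rk) ℝ) (D : ℕ → Matrix (Fin rk) (Fin nk) ℝ)
    (hX : ∀ p (Y : Matrix (Fin m) (Fin k) ℝ),
      Ffun A₁ W₁ A₂ (X (p + 1)) (C p) (B p) (D p) ≤ Ffun A₁ W₁ A₂ Y (C p) (B p) (D p))
    (hC : ∀ p (Y : Matrix (Fin k) (Fin nk) ℝ),
      Ffun A₁ W₁ A₂ (X (p + 1)) (C (p + 1)) (B p) (D p) ≤
        Ffun A₁ W₁ A₂ (X (p + 1)) Y (B p) (D p))
    (hB : ∀ p (Y : Matrix (Fin m) (Fin rk) ℝ),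
      Ffun A₁ W₁ A₂ (X (p + 1)) (C (p + 1)) (B (p + 1)) (D p) ≤
        Ffun A₁ W₁ A₂ (X (p + 1)) (C (p + 1)) Y (D p))
    (hD : ∀ p (Y : Matrix (Fin rk) (Fin nk) ℝ),
      Ffun A₁ W₁ A₂ (X (p + 1)) (C (p + 1)) (B (p + 1)) (D (p + 1)) ≤
        Ffun A₁ W₁ A₂ (X (p + 1)) (C (p + 1)) (B (p + 1)) Y) :
    ∀ p : ℕ,
      Ffun A₁ W₁ A₂ (X p) (C p) (B p) (D p) -
          Ffun A₁ W₁ A₂ (X (p + 1)) (C (p + 1)) (B (p + 1)) (D (p + 1)) =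
        frobSq (Matrix.hadamard (X p - X (p + 1)) W₁) +
          frobSq ((X p - X (p + 1)) * C p) +
          frobSq (X (p + 1) * (C p - C (p + 1))) +
          frobSq ((B p - B (p + 1)) * D p) +
          frobSq (B (p + 1) * (D p - D (p + 1))) := by
  intro p
  -- Step X
  have stepX : Ffun A₁ W₁ A₂ (X p) (C p) (B p) (D p) =
      Ffun A₁ W₁ A₂ (X (p+1)) (C p) (B p) (D p) +
      (frobSq (Matrix.hadamard (X p - X (p+1)) W₁) + frobSq ((X p - X (p+1)) * C p)) := by
    have e := quad_diff (Matrix.hadamard (A₁ - X (p+1)) W₁)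
        (Matrix.hadamard (X (p+1) - X p) W₁)
        (A₂ - X (p+1) * C p - B p * D p) ((X (p+1) - X p) * C p)
        (by
          intro t
          have h := hX p (X (p+1) + t • (X p - X (p+1)))
          have e1 : Matrix.hadamard (A₁ - (X (p+1) + t • (X p - X (p+1)))) W₁ =
              Matrix.hadamard (A₁ - X (p+1)) W₁ + t • Matrix.hadamard (X (p+1) - X p) W₁ := by
            have : A₁ - (X (p+1) + t • (X p - X (p+1))) =
                (A₁ - X (p+1)) + t • (X (p+1) - X p) := by module
            rw [this, Matrix.add_hadamard, Matrix.smul_hadamard]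
          have e2 : A₂ - (X (p+1) + t • (X p - X (p+1))) * C p - B p * D p =
              (A₂ - X (p+1) * C p - B p * D p) + t • ((X (p+1) - X p) * C p) := by
            simp only [Matrix.add_mul, Matrix.sub_mul, Matrix.smul_mul]
            module
          simpa only [Ffun, e1, e2] using h)
    have e3 : Matrix.hadamard (A₁ - X (p+1)) W₁ + Matrix.hadamard (X (p+1) - X p) W₁ =
        Matrix.hadamard (A₁ - X p) W₁ := by
      rw [← Matrix.add_hadamard, sub_add_sub_cancel]
    have e4 : (A₂ - X (p+1) * C p - B p * D p) + (X (p+1) - X p) * C p =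
        A₂ - X p * C p - B p * D p := by
      simp only [Matrix.sub_mul]; module
    have e5 : frobSq (Matrix.hadamard (X (p+1) - X p) W₁) =
        frobSq (Matrix.hadamard (X p - X (p+1)) W₁) := by
      rw [(neg_sub (X p) (X (p+1))).symm, show
        Matrix.hadamard (-(X p - X (p+1))) W₁ = -(Matrix.hadamard (X p - X (p+1)) W₁) by
          ext i j; simp [Matrix.hadamard_apply]; ring, frobSq_neg']
    have e6 : frobSq ((X (p+1) - X p) * C p) = frobSq ((X p - X (p+1)) * C p) := by
      rw [(neg_sub (X p) (X (p+1))).symm, Matrix.neg_mul, frobSq_neg']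
    rw [e3, e4, e5, e6] at e
    simp only [Ffun]
    linarith
  -- Step C
  have stepC : Ffun A₁ W₁ A₂ (X (p+1)) (C p) (B p) (D p) =
      Ffun A₁ W₁ A₂ (X (p+1)) (C (p+1)) (B p) (D p) +
      frobSq (X (p+1) * (C p - C (p+1))) := by
    have e := quad_diff (A₂ - X (p+1) * C (p+1) - B p * D p)
        (X (p+1) * (C (p+1) - C p))
        (Matrix.hadamard (A₁ - X (p+1)) W₁) (0 : Matrix (Fin m) (Fin k) ℝ)
        (by
          intro t
          have h := hC p (C (p+1) + t • (C p - C (p+1)))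
          have e1 : A₂ - X (p+1) * (C (p+1) + t • (C p - C (p+1))) - B p * D p =
              (A₂ - X (p+1) * C (p+1) - B p * D p) + t • (X (p+1) * (C (p+1) - C p)) := by
            simp only [Matrix.mul_add, Matrix.mul_sub, Matrix.mul_smul]
            module
          simp only [smul_zero, add_zero]
          simp only [Ffun, e1] at h
          linarith)
    have e3 : (A₂ - X (p+1) * C (p+1) - B p * D p) + X (p+1) * (C (p+1) - C p) =
        A₂ - X (p+1) * C p - B p * D p := by
      simp only [Matrix.mul_sub]; module
    have e5 : frobSq (X (p+1) * (C (p+1) - C p)) = frobSq (X (p+1) * (C p - C (p+1))) := by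
      rw [(neg_sub (C p) (C (p+1))).symm, Matrix.mul_neg, frobSq_neg']
    rw [e3, e5, add_zero, frobSq_zero', add_zero] at e
    simp only [Ffun]
    linarith
  -- Step B
  have stepB : Ffun A₁ W₁ A₂ (X (p+1)) (C (p+1)) (B p) (D p) =
      Ffun A₁ W₁ A₂ (X (p+1)) (C (p+1)) (B (p+1)) (D p) +
      frobSq ((B p - B (p+1)) * D p) := by
    have e := quad_diff (A₂ - X (p+1) * C (p+1) - B (p+1) * D p)
        ((B (p+1) - B p) * D p)
        (Matrix.hadamard (A₁ - X (p+1)) W₁) (0 : Matrix (Fin m) (Fin k) ℝ)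
        (by
          intro t
          have h := hB p (B (p+1) + t • (B p - B (p+1)))
          have e1 : A₂ - X (p+1) * C (p+1) - (B (p+1) + t • (B p - B (p+1))) * D p =
              (A₂ - X (p+1) * C (p+1) - B (p+1) * D p) + t • ((B (p+1) - B p) * D p) := by
            simp only [Matrix.add_mul, Matrix.sub_mul, Matrix.smul_mul]
            module
          simp only [smul_zero, add_zero]
          simp only [Ffun, e1] at h
          linarith)
    have e3 : (A₂ - X (p+1) * C (p+1) - B (p+1) * D p) + (B (p+1) - B p) * D p =
        A₂ - X (p+1) * C (p+1) - B p * D p := by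
      simp only [Matrix.sub_mul]; module
    have e5 : frobSq ((B (p+1) - B p) * D p) = frobSq ((B p - B (p+1)) * D p) := by
      rw [(neg_sub (B p) (B (p+1))).symm, Matrix.neg_mul, frobSq_neg']
    rw [e3, e5, add_zero, frobSq_zero', add_zero] at e
    simp only [Ffun]
    linarith
  -- Step D
  have stepD : Ffun A₁ W₁ A₂ (X (p+1)) (C (p+1)) (B (p+1)) (D p) =
      Ffun A₁ W₁ A₂ (X (p+1)) (C (p+1)) (B (p+1)) (D (p+1)) +
      frobSq (B (p+1) * (D p - D (p+1))) := by
    have e := quad_diff (A₂ - X (p+1) * C (p+1) - B (p+1) * D (p+1))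
        (B (p+1) * (D (p+1) - D p))
        (Matrix.hadamard (A₁ - X (p+1)) W₁) (0 : Matrix (Fin m) (Fin k) ℝ)
        (by
          intro t
          have h := hD p (D (p+1) + t • (D p - D (p+1)))
          have e1 : A₂ - X (p+1) * C (p+1) - B (p+1) * (D (p+1) + t • (D p - D (p+1))) =
              (A₂ - X (p+1) * C (p+1) - B (p+1) * D (p+1)) +
                t • (B (p+1) * (D (p+1) - D p)) := by
            simp only [Matrix.mul_add, Matrix.mul_sub, Matrix.mul_smul]
            module
          simp only [smul_zero, add_zero]
          simp only [Ffun, e1] at h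
          linarith)
    have e3 : (A₂ - X (p+1) * C (p+1) - B (p+1) * D (p+1)) + B (p+1) * (D (p+1) - D p) =
        A₂ - X (p+1) * C (p+1) - B (p+1) * D p := by
      simp only [Matrix.mul_sub]; module
    have e5 : frobSq (B (p+1) * (D (p+1) - D p)) = frobSq (B (p+1) * (D p - D (p+1))) := by
      rw [(neg_sub (D p) (D (p+1))).symm, Matrix.mul_neg, frobSq_neg']
    rw [e3, e5, add_zero, frobSq_zero', add_zero] at e
    simp only [Ffun]
    linarith
  linarith [stepX, stepC, stepB, stepD]
end

section
/- Under the alternating minimization iteration for F(X₁,C,B,D) = ‖(A₁−X₁)⊙W₁‖_F² + ‖A₂ − X₁C − BD‖_F², the decrease satisfies m_p − m_{p+1} ≥ (1/2)‖B_{p+1}D_{p+1} − B_pD_p‖_F² for all p, where m_p = F((X₁)_p, C_p, B_p, D_p). -/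
open Matrix Filter Topology

/-!
Write `M = A₂ - X₁C` for the current data of the least-squares term. Because the `B`- and
`D`-updates are exact minimizations of the linear least-squares problems `Y ↦ ‖M - YD‖²` and
`Y ↦ ‖M - BY‖²`, each leaves an orthogonal residual, so by Pythagoras it decreases the objective
by exactly `‖(B_p - B_{p+1})D_p‖²`, respectively `‖B_{p+1}(D_p - D_{p+1})‖²`. The `X₁`- and
`C`-updates do not increase the objective, and `‖u + v‖² ≤ 2‖u‖² + 2‖v‖²` applied to
`B_pD_p - B_{p+1}D_{p+1} = (B_p - B_{p+1})D_p + B_{p+1}(D_p - D_{p+1})` gives the bound.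
-/

open scoped RealInnerProductSpace

section InnerProductSpace

variable {E : Type*} [NormedAddCommGroup E] [InnerProductSpace ℝ E]

theorem real_inner_eq_zero_of_forall_norm_le_norm_sub_smul {a b : E}
    (h : ∀ t : ℝ, ‖a‖ ≤ ‖a - t • b‖) : ⟪a, b⟫ = 0 := by
  rcases eq_or_ne b 0 with rfl | hb
  · exact inner_zero_right a
  have hb2 : 0 < ‖b‖ ^ 2 := by positivity
  -- test minimality at the optimal step `t = ⟪a, b⟫ / ‖b‖²`
  set t := ⟪a, b⟫ / ‖b‖ ^ 2
  have ht : t * ‖b‖ ^ 2 = ⟪a, b⟫ := div_mul_cancel₀ _ hb2.ne'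
  have key := (sq_le_sq₀ (norm_nonneg _) (norm_nonneg _)).2 (h t)
  rw [norm_sub_sq_real, real_inner_smul_right, norm_smul, mul_pow, Real.norm_eq_abs, sq_abs] at key
  have : ⟪a, b⟫ ^ 2 ≤ 0 := by nlinarith
  exact pow_eq_zero_iff two_ne_zero |>.1 (le_antisymm this (sq_nonneg _))

theorem norm_sub_sq_eq_of_forall_norm_le_norm_sub_smul {a b : E}
    (h : ∀ t : ℝ, ‖a‖ ≤ ‖a - t • b‖) : ‖a - b‖ ^ 2 = ‖a‖ ^ 2 + ‖b‖ ^ 2 := by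
  rw [norm_sub_sq_real, real_inner_eq_zero_of_forall_norm_le_norm_sub_smul h]
  ring

end InnerProductSpace

section Frobenius

variable {α β γ : Type*} [Fintype α] [Fintype β] [Fintype γ]

noncomputable def Matrix.toEuclidean : Matrix α β ℝ ≃ₗ[ℝ] EuclideanSpace ℝ (α × β) :=
  (LinearEquiv.curry ℝ ℝ α β).symm.trans (WithLp.linearEquiv 2 ℝ (α × β → ℝ)).symm

theorem frobSq_eq_norm_toEuclidean_sq (A : Matrix α β ℝ) :
    frobSq A = ‖A.toEuclidean‖ ^ 2 := by
  simp only [frobSq, EuclideanSpace.norm_sq_eq, Fintype.sum_prod_type, Real.norm_eq_abs, sq_abs]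
  rfl

theorem frobSq_sub_eq_add_of_forall_le {N P : Matrix α β ℝ}
    (h : ∀ t : ℝ, frobSq N ≤ frobSq (N - t • P)) : frobSq (N - P) = frobSq N + frobSq P := by
  simp only [frobSq_eq_norm_toEuclidean_sq, map_sub, map_smul] at h ⊢
  exact norm_sub_sq_eq_of_forall_norm_le_norm_sub_smul fun t =>
    (sq_le_sq₀ (norm_nonneg _) (norm_nonneg _)).1 (h t)

theorem frobSq_sub_mul_eq_of_forall_le_left {M : Matrix α γ ℝ} {D : Matrix β γ ℝ}
    {B₀ : Matrix α β ℝ} (h : ∀ Y, frobSq (M - B₀ * D) ≤ frobSq (M - Y * D)) (B : Matrix α β ℝ) :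
    frobSq (M - B * D) = frobSq (M - B₀ * D) + frobSq ((B - B₀) * D) := by
  have hB : M - B * D = M - B₀ * D - (B - B₀) * D := by rw [Matrix.sub_mul]; abel
  rw [hB]
  refine frobSq_sub_eq_add_of_forall_le fun t => ?_
  have hY : M - B₀ * D - t • ((B - B₀) * D) = M - (B₀ + t • (B - B₀)) * D := by
    rw [Matrix.add_mul, Matrix.smul_mul]; abel
  exact hY ▸ h _

theorem frobSq_sub_mul_eq_of_forall_le_right {M : Matrix α γ ℝ} {B : Matrix α β ℝ}
    {D₀ : Matrix β γ ℝ} (h : ∀ Y, frobSq (M - B * D₀) ≤ frobSq (M - B * Y)) (D : Matrix β γ ℝ) :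
    frobSq (M - B * D) = frobSq (M - B * D₀) + frobSq (B * (D - D₀)) := by
  have hD : M - B * D = M - B * D₀ - B * (D - D₀) := by rw [Matrix.mul_sub]; abel
  rw [hD]
  refine frobSq_sub_eq_add_of_forall_le fun t => ?_
  have hY : M - B * D₀ - t • (B * (D - D₀)) = M - B * (D₀ + t • (D - D₀)) := by
    rw [Matrix.mul_add, Matrix.mul_smul]; abel
  exact hY ▸ h _

theorem frobSq_add_le (U V : Matrix α β ℝ) : frobSq (U + V) ≤ 2 * frobSq U + 2 * frobSq V := by
  simp only [frobSq, Matrix.add_apply, Finset.mul_sum, ← Finset.sum_add_distrib]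
  exact Finset.sum_le_sum fun i _ => Finset.sum_le_sum fun j _ => by
    nlinarith [sq_nonneg (U i j - V i j)]

theorem frobSq_mul_sub_mul_le (B₁ B₂ : Matrix α β ℝ) (D₁ D₂ : Matrix β γ ℝ) :
    frobSq (B₂ * D₂ - B₁ * D₁) ≤ 2 * frobSq ((B₁ - B₂) * D₁) + 2 * frobSq (B₂ * (D₁ - D₂)) := by
  have hsplit : B₂ * D₂ - B₁ * D₁ = -((B₁ - B₂) * D₁ + B₂ * (D₁ - D₂)) := by
    rw [Matrix.sub_mul, Matrix.mul_sub]; abel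
  rw [hsplit, frobSq_eq_norm_toEuclidean_sq, map_neg, norm_neg, ← frobSq_eq_norm_toEuclidean_sq]
  exact frobSq_add_le _ _

end Frobenius

theorem Ffun_le_Ffun_iff {m k nk rk : ℕ} {A₁ W₁ : Matrix (Fin m) (Fin k) ℝ}
    {A₂ : Matrix (Fin m) (Fin nk) ℝ} {X : Matrix (Fin m) (Fin k) ℝ} {C : Matrix (Fin k) (Fin nk) ℝ}
    {B B' : Matrix (Fin m) (Fin rk) ℝ} {D D' : Matrix (Fin rk) (Fin nk) ℝ} :
    Ffun A₁ W₁ A₂ X C B D ≤ Ffun A₁ W₁ A₂ X C B' D' ↔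
      frobSq (A₂ - X * C - B * D) ≤ frobSq (A₂ - X * C - B' * D') :=
  add_le_add_iff_left _

theorem stmt8_general {m k nk rk : ℕ}
    (A₁ W₁ : Matrix (Fin m) (Fin k) ℝ) (A₂ : Matrix (Fin m) (Fin nk) ℝ)
    (X : ℕ → Matrix (Fin m) (Fin k) ℝ) (C : ℕ → Matrix (Fin k) (Fin nk) ℝ)
    (B : ℕ → Matrix (Fin m) (Fin rk) ℝ) (D : ℕ → Matrix (Fin rk) (Fin nk) ℝ)
    (hX : ∀ p (Y : Matrix (Fin m) (Fin k) ℝ),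
      Ffun A₁ W₁ A₂ (X (p + 1)) (C p) (B p) (D p) ≤ Ffun A₁ W₁ A₂ Y (C p) (B p) (D p))
    (hC : ∀ p (Y : Matrix (Fin k) (Fin nk) ℝ),
      Ffun A₁ W₁ A₂ (X (p + 1)) (C (p + 1)) (B p) (D p) ≤
        Ffun A₁ W₁ A₂ (X (p + 1)) Y (B p) (D p))
    (hB : ∀ p (Y : Matrix (Fin m) (Fin rk) ℝ),
      Ffun A₁ W₁ A₂ (X (p + 1)) (C (p + 1)) (B (p + 1)) (D p) ≤
        Ffun A₁ W₁ A₂ (X (p + 1)) (C (p + 1)) Y (D p))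
    (hD : ∀ p (Y : Matrix (Fin rk) (Fin nk) ℝ),
      Ffun A₁ W₁ A₂ (X (p + 1)) (C (p + 1)) (B (p + 1)) (D (p + 1)) ≤
        Ffun A₁ W₁ A₂ (X (p + 1)) (C (p + 1)) (B (p + 1)) Y) :
    ∀ p : ℕ,
      (1 / 2) * frobSq (B (p + 1) * D (p + 1) - B p * D p) ≤
        Ffun A₁ W₁ A₂ (X p) (C p) (B p) (D p) -
          Ffun A₁ W₁ A₂ (X (p + 1)) (C (p + 1)) (B (p + 1)) (D (p + 1)) := by
  intro p
  have hXC : Ffun A₁ W₁ A₂ (X (p + 1)) (C (p + 1)) (B p) (D p) ≤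
      Ffun A₁ W₁ A₂ (X p) (C p) (B p) (D p) :=
    (hC p (C p)).trans (hX p (X p))
  have decreaseB := frobSq_sub_mul_eq_of_forall_le_left (fun Y => Ffun_le_Ffun_iff.1 (hB p Y)) (B p)
  have decreaseD :=
    frobSq_sub_mul_eq_of_forall_le_right (fun Y => Ffun_le_Ffun_iff.1 (hD p Y)) (D p)
  have split := frobSq_mul_sub_mul_le (B p) (B (p + 1)) (D p) (D (p + 1))
  unfold Ffun at hXC ⊢
  linarith

/-- Decrease bound: m_p − m_{p+1} ≥ (1/2)‖B_{p+1}D_{p+1} − B_pD_p‖_F². -/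
theorem stmt8 {m k nk rk : ℕ}
    (A₁ W₁ : Matrix (Fin m) (Fin k) ℝ) (A₂ : Matrix (Fin m) (Fin nk) ℝ)
    (hW : ∀ i j, 0 < W₁ i j)
    (X : ℕ → Matrix (Fin m) (Fin k) ℝ) (C : ℕ → Matrix (Fin k) (Fin nk) ℝ)
    (B : ℕ → Matrix (Fin m) (Fin rk) ℝ) (D : ℕ → Matrix (Fin rk) (Fin nk) ℝ)
    (hX : ∀ p (Y : Matrix (Fin m) (Fin k) ℝ),
      Ffun A₁ W₁ A₂ (X (p + 1)) (C p) (B p) (D p) ≤ Ffun A₁ W₁ A₂ Y (C p) (B p) (D p))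
    (hC : ∀ p (Y : Matrix (Fin k) (Fin nk) ℝ),
      Ffun A₁ W₁ A₂ (X (p + 1)) (C (p + 1)) (B p) (D p) ≤
        Ffun A₁ W₁ A₂ (X (p + 1)) Y (B p) (D p))
    (hB : ∀ p (Y : Matrix (Fin m) (Fin rk) ℝ),
      Ffun A₁ W₁ A₂ (X (p + 1)) (C (p + 1)) (B (p + 1)) (D p) ≤
        Ffun A₁ W₁ A₂ (X (p + 1)) (C (p + 1)) Y (D p))
    (hD : ∀ p (Y : Matrix (Fin rk) (Fin nk) ℝ),
      Ffun A₁ W₁ A₂ (X (p + 1)) (C (p + 1)) (B (p + 1)) (D (p + 1)) ≤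
        Ffun A₁ W₁ A₂ (X (p + 1)) (C (p + 1)) (B (p + 1)) Y) :
    ∀ p : ℕ,
      (1 / 2) * frobSq (B (p + 1) * D (p + 1) - B p * D p) ≤
        Ffun A₁ W₁ A₂ (X p) (C p) (B p) (D p) -
          Ffun A₁ W₁ A₂ (X (p + 1)) (C (p + 1)) (B (p + 1)) (D (p + 1)) :=
  stmt8_general A₁ W₁ A₂ X C B D hX hC hB hD
end
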